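/- Let ⟨·,·⟩ be a nondegenerate symmetric bilinear form on a finite-dimensional real vector space V, and let φ₁, φ₂ be endomorphisms of V, skew-adjoint with respect to ⟨·,·⟩, satisfying φ₁∘φ₁ = 0, φ₂∘φ₂ = 0, φ₁∘φ₂ + φ₂∘φ₁ = 0, and φ₁∘φ₂ ≠ 0. Set A := −(1/3)(A_{φ₁} + A_{φ₂}). Then A is an algebraic curvature tensor whose Jacobi operator satisfies J_A(x)∘J_A(x) = 0 for every x ∈ V, and yet A is not Jacobi–Tsankov: there exist x₁, x₂ ∈ V with J_A(x₁)∘J_A(x₂) ≠ J_A(x₂)∘J_A(x₁). -/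

import Mathlib

noncomputable section

/-- The Jacobi operator `J(x) : y ↦ 𝒜(y,x)x` of a (tri)linear curvature operator `𝒜`. -/
def jacobiOp {V : Type*} [AddCommGroup V] [Module ℝ V]
    (Aop : V →ₗ[ℝ] V →ₗ[ℝ] V →ₗ[ℝ] V) (x : V) : V →ₗ[ℝ] V where
  toFun y := Aop y x x
  map_add' y z := by simp
  map_smul' c y := by simp

/-- The polarized Jacobi operator `J(x,y) : z ↦ ½(𝒜(z,x)y + 𝒜(z,y)x)`. -/
def jacobiPol {V : Type*} [AddCommGroup V] [Module ℝ V]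
    (Aop : V →ₗ[ℝ] V →ₗ[ℝ] V →ₗ[ℝ] V) (x y : V) : V →ₗ[ℝ] V where
  toFun z := (1/2 : ℝ) • (Aop z x y + Aop z y x)
  map_add' a b := by simp [smul_add]; abel
  map_smul' c a := by simp [smul_add, smul_comm c]

/-- The algebraic curvature tensor `A_φ` attached to a skew-adjoint endomorphism `φ`:
`A_φ(x,y,z,w) = ⟨φy,z⟩⟨φx,w⟩ - ⟨φx,z⟩⟨φy,w⟩ - 2⟨φx,y⟩⟨φz,w⟩`. -/
def Aphi {V : Type*} [AddCommGroup V] [Module ℝ V] (B : LinearMap.BilinForm ℝ V)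
    (φ : V →ₗ[ℝ] V) (x y z w : V) : ℝ :=
  B (φ y) z * B (φ x) w - B (φ x) z * B (φ y) w - 2 * B (φ x) y * B (φ z) w

/-!
With `ω(a, b) := ⟨φ a, b⟩` alternating, `A_φ(y, x, x, w) = -3 ω(y, x) ω(x, w)`, so the Jacobi
operator of `A = -⅓(A_{φ₁} + A_{φ₂})` is `J(x) y = ⟨φ₁ y, x⟩ φ₁ x + ⟨φ₂ y, x⟩ φ₂ x`. Since `φ₁φ₂`
is again skew-adjoint when `φ₁, φ₂` anticommute, `⟨φ₁φ₂ x, x⟩ = 0`, and with `φ₁² = φ₂² = 0` this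
makes `J(x)` kill `φ₁ x` and `φ₂ x`, whence `J(x)² = 0`. Choosing `a, b` with
`c := ⟨φ₁φ₂ a, b⟩ ≠ 0`, the vector `φ₂ a` is killed by `J(b) J(a)` but sent to `c² φ₂ a ≠ 0` by
`J(a) J(b)`.
-/

section CurvatureTensor

variable {V : Type*} [AddCommGroup V] [Module ℝ V] {B : LinearMap.BilinForm ℝ V}

theorem LinearMap.BilinForm.apply_flip_of_skewAdjoint {φ : V →ₗ[ℝ] V}
    (hB : ∀ x y : V, B x y = B y x) (hφ : ∀ x y : V, B (φ x) y = -B x (φ y)) (a b : V) :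
    B (φ a) b = -B (φ b) a := by
  rw [hφ, hB]

variable {φ : V →ₗ[ℝ] V}

theorem Aphi_swap_left (hφ : ∀ a b : V, B (φ a) b = -B (φ b) a) (x y z w : V) :
    Aphi B φ x y z w = -Aphi B φ y x z w := by
  simp only [Aphi]
  rw [hφ y x]
  ring

theorem Aphi_swap_pairs (hφ : ∀ a b : V, B (φ a) b = -B (φ b) a) (x y z w : V) :
    Aphi B φ x y z w = Aphi B φ z w x y := by
  simp only [Aphi]
  rw [hφ w x, hφ z y, hφ z x, hφ w y]
  ring

theorem Aphi_bianchi (hφ : ∀ a b : V, B (φ a) b = -B (φ b) a) (x y z w : V) :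
    Aphi B φ x y z w + Aphi B φ y z x w + Aphi B φ z x y w = 0 := by
  simp only [Aphi]
  rw [hφ z x, hφ y x, hφ z y]
  ring

theorem Aphi_apply_self_self (hφ : ∀ a b : V, B (φ a) b = -B (φ b) a) (x y w : V) :
    Aphi B φ y x x w = -3 * (B (φ y) x * B (φ x) w) := by
  have hxx : B (φ x) x = 0 := by linarith [hφ x x]
  simp only [Aphi, hxx]
  ring

theorem jacobiOp_apply_of_Aphi (hBnd : ∀ x : V, (∀ y : V, B x y = 0) → x = 0)
    {φ₁ φ₂ : V →ₗ[ℝ] V} (hφ₁ : ∀ a b : V, B (φ₁ a) b = -B (φ₁ b) a)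
    (hφ₂ : ∀ a b : V, B (φ₂ a) b = -B (φ₂ b) a) {Aop : V →ₗ[ℝ] V →ₗ[ℝ] V →ₗ[ℝ] V}
    (hchar : ∀ x y z w : V,
      B (Aop x y z) w = -(1/3 : ℝ) * (Aphi B φ₁ x y z w + Aphi B φ₂ x y z w)) (x y : V) :
    jacobiOp Aop x y = B (φ₁ y) x • φ₁ x + B (φ₂ y) x • φ₂ x := by
  refine sub_eq_zero.mp (hBnd _ fun w => ?_)
  change B (Aop y x x - _) w = 0
  simp only [map_sub, map_add, map_smul, LinearMap.sub_apply, LinearMap.add_apply,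
    LinearMap.smul_apply, smul_eq_mul]
  rw [hchar, Aphi_apply_self_self hφ₁, Aphi_apply_self_self hφ₂]
  ring

end CurvatureTensor

section AnticommutingPair

open LinearMap

variable {V : Type*} [AddCommGroup V] [Module ℝ V] {B : LinearMap.BilinForm ℝ V}
  {φ₁ φ₂ : V →ₗ[ℝ] V}

theorem LinearMap.apply_apply_eq_zero_of_comp_eq_zero {f g : V →ₗ[ℝ] V} (h : f ∘ₗ g = 0) (v : V) :
    f (g v) = 0 :=
  LinearMap.congr_fun h v

theorem LinearMap.apply_apply_eq_neg_of_comp_add_comp_eq_zero (hanti : φ₁ ∘ₗ φ₂ + φ₂ ∘ₗ φ₁ = 0)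
    (v : V) : φ₂ (φ₁ v) = -φ₁ (φ₂ v) :=
  eq_neg_of_add_eq_zero_right (LinearMap.congr_fun hanti v)

theorem LinearMap.BilinForm.comp_apply_flip_of_anticomm (hB : ∀ x y : V, B x y = B y x)
    (hskew₁ : ∀ x y : V, B (φ₁ x) y = -B x (φ₁ y)) (hskew₂ : ∀ x y : V, B (φ₂ x) y = -B x (φ₂ y))
    (hanti : φ₁ ∘ₗ φ₂ + φ₂ ∘ₗ φ₁ = 0) (a b : V) :
    B (φ₁ (φ₂ a)) b = -B (φ₁ (φ₂ b)) a := by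
  rw [hskew₁, hskew₂, apply_apply_eq_neg_of_comp_add_comp_eq_zero hanti, map_neg, hB]
  ring

variable {J : V → V →ₗ[ℝ] V}

theorem jacobi_comp_self_eq_zero (hB : ∀ x y : V, B x y = B y x)
    (hskew₁ : ∀ x y : V, B (φ₁ x) y = -B x (φ₁ y)) (hskew₂ : ∀ x y : V, B (φ₂ x) y = -B x (φ₂ y))
    (h₁ : φ₁ ∘ₗ φ₁ = 0) (h₂ : φ₂ ∘ₗ φ₂ = 0) (hanti : φ₁ ∘ₗ φ₂ + φ₂ ∘ₗ φ₁ = 0)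
    (hJ : ∀ x y : V, J x y = B (φ₁ y) x • φ₁ x + B (φ₂ y) x • φ₂ x) (x : V) :
    J x ∘ₗ J x = 0 := by
  have hψ : B (φ₁ (φ₂ x)) x = 0 := by
    linarith [BilinForm.comp_apply_flip_of_anticomm hB hskew₁ hskew₂ hanti x x]
  have hφ₁x : J x (φ₁ x) = 0 := by
    rw [hJ, apply_apply_eq_zero_of_comp_eq_zero h₁ x,
      apply_apply_eq_neg_of_comp_add_comp_eq_zero hanti]
    simp [hψ]
  have hφ₂x : J x (φ₂ x) = 0 := by
    rw [hJ, apply_apply_eq_zero_of_comp_eq_zero h₂ x]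
    simp [hψ]
  ext y
  rw [LinearMap.comp_apply, hJ x y, map_add, map_smul, map_smul, hφ₁x, hφ₂x]
  simp

theorem exists_jacobi_comp_ne_comp (hB : ∀ x y : V, B x y = B y x)
    (hBnd : ∀ x : V, (∀ y : V, B x y = 0) → x = 0)
    (hskew₁ : ∀ x y : V, B (φ₁ x) y = -B x (φ₁ y)) (hskew₂ : ∀ x y : V, B (φ₂ x) y = -B x (φ₂ y))
    (h₁ : φ₁ ∘ₗ φ₁ = 0) (h₂ : φ₂ ∘ₗ φ₂ = 0) (hanti : φ₁ ∘ₗ φ₂ + φ₂ ∘ₗ φ₁ = 0)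
    (hne : φ₁ ∘ₗ φ₂ ≠ 0) (hJ : ∀ x y : V, J x y = B (φ₁ y) x • φ₁ x + B (φ₂ y) x • φ₂ x) :
    ∃ b a : V, J b ∘ₗ J a ≠ J a ∘ₗ J b := by
  have hψ := BilinForm.comp_apply_flip_of_anticomm hB hskew₁ hskew₂ hanti
  obtain ⟨a, ha⟩ : ∃ a : V, φ₁ (φ₂ a) ≠ 0 := by
    by_contra! h
    exact hne (LinearMap.ext h)
  obtain ⟨b, hb⟩ : ∃ b : V, B (φ₁ (φ₂ a)) b ≠ 0 := by
    by_contra! h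
    exact ha (hBnd _ h)
  have hφ₂a : φ₂ a ≠ 0 := fun h => ha (by rw [h, map_zero])
  have hJa : J a (φ₂ a) = 0 := by
    rw [hJ, apply_apply_eq_zero_of_comp_eq_zero h₂ a]
    simp [show B (φ₁ (φ₂ a)) a = 0 by linarith [hψ a a]]
  have hJb : J b (φ₂ a) = B (φ₁ (φ₂ a)) b • φ₁ b := by
    rw [hJ, apply_apply_eq_zero_of_comp_eq_zero h₂ a]
    simp
  have hJaφ₁b : J a (φ₁ b) = B (φ₁ (φ₂ a)) b • φ₂ a := by
    rw [hJ, apply_apply_eq_zero_of_comp_eq_zero h₁ b,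
      apply_apply_eq_neg_of_comp_add_comp_eq_zero hanti, map_neg, LinearMap.neg_apply, ← hψ]
    simp
  refine ⟨b, a, fun hcomm => ?_⟩
  have h := LinearMap.congr_fun hcomm (φ₂ a)
  rw [LinearMap.comp_apply, LinearMap.comp_apply, hJa, hJb, map_zero, map_smul, hJaφ₁b, smul_smul,
    eq_comm, smul_eq_zero] at h
  exact h.elim (fun h => hb (mul_self_eq_zero.mp h)) hφ₂a

end AnticommutingPair

theorem Aphi_sum_not_jacobiTsankov
    {V : Type*} [AddCommGroup V] [Module ℝ V]
    -- a nondegenerate symmetric bilinear form ⟨·,·⟩ on V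
    (B : LinearMap.BilinForm ℝ V)
    (hBsymm : ∀ x y : V, B x y = B y x)
    (hBnd : ∀ x : V, (∀ y : V, B x y = 0) → x = 0)
    -- skew-adjoint endomorphisms φ₁, φ₂
    (φ₁ φ₂ : V →ₗ[ℝ] V)
    (hskew₁ : ∀ x y : V, B (φ₁ x) y = - B x (φ₁ y))
    (hskew₂ : ∀ x y : V, B (φ₂ x) y = - B x (φ₂ y))
    (h₁ : φ₁ ∘ₗ φ₁ = 0) (h₂ : φ₂ ∘ₗ φ₂ = 0)
    (hanti : φ₁ ∘ₗ φ₂ + φ₂ ∘ₗ φ₁ = 0) (hne : φ₁ ∘ₗ φ₂ ≠ 0)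
    -- the curvature operator of A := -(1/3)(A_{φ₁} + A_{φ₂})
    (Aop : V →ₗ[ℝ] V →ₗ[ℝ] V →ₗ[ℝ] V)
    (hchar : ∀ x y z w : V,
      B (Aop x y z) w = -(1/3 : ℝ) * (Aphi B φ₁ x y z w + Aphi B φ₂ x y z w)) :
    -- A is an algebraic curvature tensor
    (∀ x y z w : V,
      -(1/3 : ℝ) * (Aphi B φ₁ x y z w + Aphi B φ₂ x y z w)
        = -(-(1/3 : ℝ) * (Aphi B φ₁ y x z w + Aphi B φ₂ y x z w))) ∧
    (∀ x y z w : V,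
      -(1/3 : ℝ) * (Aphi B φ₁ x y z w + Aphi B φ₂ x y z w)
        = -(1/3 : ℝ) * (Aphi B φ₁ z w x y + Aphi B φ₂ z w x y)) ∧
    (∀ x y z w : V,
      -(1/3 : ℝ) * (Aphi B φ₁ x y z w + Aphi B φ₂ x y z w)
        + -(1/3 : ℝ) * (Aphi B φ₁ y z x w + Aphi B φ₂ y z x w)
        + -(1/3 : ℝ) * (Aphi B φ₁ z x y w + Aphi B φ₂ z x y w) = 0) ∧
    -- J_A(x)² = 0 for all x
    (∀ x : V, jacobiOp Aop x ∘ₗ jacobiOp Aop x = 0) ∧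
    -- A is not Jacobi–Tsankov
    (∃ x₁ x₂ : V, jacobiOp Aop x₁ ∘ₗ jacobiOp Aop x₂ ≠ jacobiOp Aop x₂ ∘ₗ jacobiOp Aop x₁) := by
  have hφ₁ := LinearMap.BilinForm.apply_flip_of_skewAdjoint hBsymm hskew₁
  have hφ₂ := LinearMap.BilinForm.apply_flip_of_skewAdjoint hBsymm hskew₂
  have hJ := jacobiOp_apply_of_Aphi hBnd hφ₁ hφ₂ hchar
  refine ⟨fun x y z w => ?_, fun x y z w => ?_, fun x y z w => ?_,
    jacobi_comp_self_eq_zero hBsymm hskew₁ hskew₂ h₁ h₂ hanti hJ,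
    exists_jacobi_comp_ne_comp hBsymm hBnd hskew₁ hskew₂ h₁ h₂ hanti hne hJ⟩
  · rw [Aphi_swap_left hφ₁ x y, Aphi_swap_left hφ₂ x y]
    ring
  · rw [Aphi_swap_pairs hφ₁ x y, Aphi_swap_pairs hφ₂ x y]
  · linear_combination (-(1/3 : ℝ)) * (Aphi_bianchi hφ₁ x y z w + Aphi_bianchi hφ₂ x y z w)
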